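/- Let f : ℝ → ℝ be nonnegative on [x−h, x+h], let 0 < ε < 1, and for t > 0 define W(t) = ∑_{x−t < n < x+t} f(n)·max(1 − |x−n|/t, 0). Then ∑_{x−h < n < x+h} f(n) ≥ −(1/ε)·((1−ε)·W((1−ε)h) − W(h)). -/

import Mathlib

/-- Pointwise weight comparison. -/
lemma weight_bound (h ε a : ℝ) (hh : 0 < h) (hε : 0 < ε) (hε1 : ε < 1) (ha : 0 ≤ a) :
    max (1 - a / h) 0 ≤ ε + (1 - ε) * max (1 - a / ((1 - ε) * h)) 0 := by
  have hεh : 0 < (1 - ε) * h := by nlinarith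
  rcases le_or_gt a ((1 - ε) * h) with hle | hlt
  · have h1 : max (1 - a / ((1 - ε) * h)) 0 = 1 - a / ((1 - ε) * h) := by
      apply max_eq_left
      rw [sub_nonneg]
      exact (div_le_one hεh).mpr hle
    rw [h1]
    have heq : ε + (1 - ε) * (1 - a / ((1 - ε) * h)) = 1 - a / h := by
      have hne : (1 - ε) ≠ 0 := by linarith
      field_simp
      ring
    rw [heq]
    apply max_le le_rfl
    rw [sub_nonneg, div_le_one hh]
    nlinarith
  · have h2 : 0 ≤ (1 - ε) * max (1 - a / ((1 - ε) * h)) 0 :=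
      mul_nonneg (by linarith) (le_max_right _ _)
    have h3 : max (1 - a / h) 0 ≤ ε := by
      apply max_le _ hε.le
      have : 1 - ε < a / h := by
        rw [lt_div_iff₀ hh]; nlinarith
      linarith
    linarith

/-- Lower bound for an unweighted sum over `(x−h, x+h)` in terms of the Fejér-weighted sums
`W(t) = ∑_{x−t < n < x+t} f(n) max(1 − |x−n|/t, 0)`: if `f` is nonnegative on `[x−h, x+h]` and
`0 < ε < 1`, then `∑_{x−h < n < x+h} f(n) ≥ −ε⁻¹ ((1−ε) W((1−ε)h) − W(h))`. -/
theorem sum_ge_weighted_diff (f : ℝ → ℝ) (x h ε : ℝ) (hh : 0 < h)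
    (hε : 0 < ε) (hε1 : ε < 1)
    (hf : ∀ t ∈ Set.Icc (x - h) (x + h), 0 ≤ f t) :
    (∑ n ∈ Finset.Ioo ⌊x - h⌋ ⌈x + h⌉, f (n : ℝ)) ≥
      -((1 / ε) *
        ((1 - ε) * (∑ n ∈ Finset.Ioo ⌊x - (1 - ε) * h⌋ ⌈x + (1 - ε) * h⌉,
            f (n : ℝ) * max (1 - |x - (n : ℝ)| / ((1 - ε) * h)) 0)
          - ∑ n ∈ Finset.Ioo ⌊x - h⌋ ⌈x + h⌉,
              f (n : ℝ) * max (1 - |x - (n : ℝ)| / h) 0)) := by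
  have hεh : 0 < (1 - ε) * h := by nlinarith
  -- extend the small sum to the big index set
  have hsub : Finset.Ioo ⌊x - (1 - ε) * h⌋ ⌈x + (1 - ε) * h⌉ ⊆ Finset.Ioo ⌊x - h⌋ ⌈x + h⌉ := by
    apply Finset.Ioo_subset_Ioo
    · exact Int.floor_le_floor (by nlinarith)
    · exact Int.ceil_le_ceil (by nlinarith)
  have hext : (∑ n ∈ Finset.Ioo ⌊x - (1 - ε) * h⌋ ⌈x + (1 - ε) * h⌉,
        f (n : ℝ) * max (1 - |x - (n : ℝ)| / ((1 - ε) * h)) 0)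
      = ∑ n ∈ Finset.Ioo ⌊x - h⌋ ⌈x + h⌉,
        f (n : ℝ) * max (1 - |x - (n : ℝ)| / ((1 - ε) * h)) 0 := by
    apply Finset.sum_subset hsub
    intro n _ hn
    have : ¬(x - (1 - ε) * h < (n : ℝ) ∧ (n : ℝ) < x + (1 - ε) * h) := by
      intro ⟨h1, h2⟩
      exact hn (Finset.mem_Ioo.mpr ⟨Int.floor_lt.mpr h1, Int.lt_ceil.mpr h2⟩)
    have habs : (1 - ε) * h ≤ |x - (n : ℝ)| := by
      rcases not_and_or.mp this with h1 | h2
      · push_neg at h1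
        calc (1 - ε) * h ≤ x - (n : ℝ) := by linarith
          _ ≤ |x - (n : ℝ)| := le_abs_self _
      · push_neg at h2
        calc (1 - ε) * h ≤ (n : ℝ) - x := by linarith
          _ ≤ |x - (n : ℝ)| := by rw [abs_sub_comm]; exact le_abs_self _
    have : max (1 - |x - (n : ℝ)| / ((1 - ε) * h)) 0 = 0 := by
      apply max_eq_right
      rw [sub_nonpos]
      exact (one_le_div hεh).mpr habs
    rw [this, mul_zero]
  rw [hext]
  set S := Finset.Ioo ⌊x - h⌋ ⌈x + h⌉ with hS
  have key : (∑ n ∈ S, f (n : ℝ) * max (1 - |x - (n : ℝ)| / h) 0)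
      ≤ ∑ n ∈ S, (ε * f (n : ℝ)
        + (1 - ε) * (f (n : ℝ) * max (1 - |x - (n : ℝ)| / ((1 - ε) * h)) 0)) := by
    apply Finset.sum_le_sum
    intro n hn
    have hmem := Finset.mem_Ioo.mp hn
    have h1 : x - h < (n : ℝ) := Int.floor_lt.mp hmem.1
    have h2 : (n : ℝ) < x + h := Int.lt_ceil.mp hmem.2
    have hfn : 0 ≤ f (n : ℝ) := hf _ ⟨h1.le, h2.le⟩
    have hw := weight_bound h ε |x - (n : ℝ)| hh hε hε1 (abs_nonneg _)
    nlinarith [mul_le_mul_of_nonneg_left hw hfn]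
  rw [Finset.sum_add_distrib, ← Finset.mul_sum, ← Finset.mul_sum] at key
  set A := ∑ n ∈ S, f (n : ℝ) * max (1 - |x - (n : ℝ)| / ((1 - ε) * h)) 0
  set B := ∑ n ∈ S, f (n : ℝ) * max (1 - |x - (n : ℝ)| / h) 0
  set T := ∑ n ∈ S, f (n : ℝ)
  rw [ge_iff_le]
  have h2 : B - (1 - ε) * A ≤ ε * T := by linarith
  calc -((1 / ε) * ((1 - ε) * A - B)) = (1 / ε) * (B - (1 - ε) * A) := by ring
    _ ≤ (1 / ε) * (ε * T) := by
        apply mul_le_mul_of_nonneg_left h2 (by positivity)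
    _ = T := by field_simp
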